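/- Let 0 < ρ < 1 and set G(z) = ρ z / (1 − ρ z). Then 1 + 2 Re G(z) > 0 for all z ∈ 𝔻, and for every r ∈ (0, 1): N_G(r) = r²/(1−r²) − ρ² r²/(1 − ρ² r²). -/

import Mathlib

open Complex MeasureTheory

/-- The Edelman–Kostlan integral: the expected number of zeros in `𝔻(r)` of the GAF
associated with `G(z) = Σ_{k≥1} conj(γ(k)) z^k`. -/
noncomputable def NG (G : ℂ → ℂ) (r : ℝ) : ℝ :=
  (1 / Real.pi) * ∫ z in Metric.ball (0 : ℂ) r,
    (1 / (1 - ‖z‖ ^ 2) ^ 2 - ‖deriv G z‖ ^ 2 / (1 + 2 * (G z).re) ^ 2)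

open Set Metric Real

/-! With `w = ρz` one has `1 + 2 Re (w / (1 - w)) = (1 - |w|²) / |1 - w|²` and
`G'(z) = ρ / (1 - ρz)²`, so the factors `|1 - ρz|` cancel and the integrand of `N_G` becomes the
radial function `1 / (1 - |z|²)² - ρ² / (1 - ρ²|z|²)²`. In polar coordinates each term
`a² / (1 - a²s²)²` integrates against `2πs ds` over `[0, r]` to `π a²r² / (1 - a²r²)`;
take `a = 1` and `a = ρ`. -/

theorem Complex.setIntegral_ball_comp_norm {E : Type*} [NormedAddCommGroup E] [NormedSpace ℝ E]
    (f : ℝ → E) {r : ℝ} (hr : 0 ≤ r) :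
    ∫ z in ball (0 : ℂ) r, f ‖z‖ = (2 * π) • ∫ s in (0 : ℝ)..r, s • f s := by
  have hball :
      (ball (0 : ℂ) r).indicator (fun z => f ‖z‖) = fun z => (Iio r).indicator f ‖z‖ := by
    ext z
    by_cases h : ‖z‖ < r <;> simp [indicator, h]
  have hrad : ∀ s : ℝ, s ^ (Module.finrank ℝ ℂ - 1) • (Iio r).indicator f s
      = (Iio r).indicator (fun s => s • f s) s := by
    intro s
    by_cases h : s < r <;> simp [indicator, h, Complex.finrank_real_complex]
  rw [← integral_indicator measurableSet_ball, hball, integral_fun_norm_addHaar,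
    funext hrad, setIntegral_indicator measurableSet_Iio, Ioi_inter_Iio,
    ← integral_Ioc_eq_integral_Ioo, ← intervalIntegral.integral_of_le hr,
    Complex.finrank_real_complex, Measure.real, Complex.volume_ball]
  simp only [ENNReal.ofReal_one, one_pow, one_mul, ENNReal.coe_toReal, NNReal.coe_real_pi]
  rw [two_smul, two_mul, add_smul]

lemma one_add_two_mul_re_div_one_sub (w : ℂ) (hw : w ≠ 1) :
    1 + 2 * (w / (1 - w)).re = (1 - ‖w‖ ^ 2) / ‖1 - w‖ ^ 2 := by
  have h : 1 - w ≠ 0 := sub_ne_zero.mpr hw.symm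
  rw [div_re, ← normSq_eq_norm_sq, ← normSq_eq_norm_sq]
  have : normSq (1 - w) ≠ 0 := normSq_eq_zero.not.mpr h
  field_simp
  simp only [normSq_apply, sub_re, sub_im, one_re, one_im]
  ring

lemma hasDerivAt_mul_div_one_sub_mul (c z : ℂ) (h : c * z ≠ 1) :
    HasDerivAt (fun z => c * z / (1 - c * z)) (c / (1 - c * z) ^ 2) z := by
  have hden : 1 - c * z ≠ 0 := sub_ne_zero.mpr (Ne.symm h)
  have hnum : HasDerivAt (fun z => c * z) c z := by simpa using (hasDerivAt_id z).const_mul c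
  exact (hnum.fun_div (hnum.const_sub 1) hden).congr_deriv (by ring)

lemma one_add_two_mul_re_div_one_sub_pos {w : ℂ} (hw : ‖w‖ < 1) :
    0 < 1 + 2 * (w / (1 - w)).re := by
  have hw1 : w ≠ 1 := by rintro rfl; simp at hw
  rw [one_add_two_mul_re_div_one_sub w hw1]
  have : 0 < ‖1 - w‖ := norm_pos_iff.mpr (sub_ne_zero.mpr hw1.symm)
  have : ‖w‖ ^ 2 < 1 := by nlinarith [norm_nonneg w]
  positivity

lemma norm_deriv_sq_div_one_add_two_mul_re_sq (c z : ℂ) (h : ‖c * z‖ < 1) :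
    ‖deriv (fun z => c * z / (1 - c * z)) z‖ ^ 2 / (1 + 2 * (c * z / (1 - c * z)).re) ^ 2
      = ‖c‖ ^ 2 / (1 - ‖c‖ ^ 2 * ‖z‖ ^ 2) ^ 2 := by
  have hcz : c * z ≠ 1 := by rintro h'; simp [h'] at h
  have hden : ‖1 - c * z‖ ≠ 0 := norm_ne_zero_iff.mpr (sub_ne_zero.mpr hcz.symm)
  have hpos : 1 - ‖c * z‖ ^ 2 ≠ 0 := by nlinarith [norm_nonneg (c * z)]
  rw [(hasDerivAt_mul_div_one_sub_mul c z hcz).deriv, one_add_two_mul_re_div_one_sub _ hcz]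
  rw [norm_mul] at hpos ⊢
  rw [norm_div, norm_pow]
  field_simp

section

variable {a r : ℝ}

lemma one_sub_sq_mul_sq_pos_of_mem_uIcc (hr : 0 ≤ r) (har : a ^ 2 * r ^ 2 < 1) {s : ℝ}
    (hs : s ∈ uIcc 0 r) :
    0 < 1 - a ^ 2 * s ^ 2 := by
  rw [uIcc_of_le hr] at hs
  have : s ^ 2 ≤ r ^ 2 := pow_le_pow_left₀ hs.1 hs.2 2
  nlinarith [sq_nonneg a]

lemma intervalIntegrable_mul_sq_div_one_sub_sq (hr : 0 ≤ r) (har : a ^ 2 * r ^ 2 < 1) :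
    IntervalIntegrable (fun s => s * (a ^ 2 / (1 - a ^ 2 * s ^ 2) ^ 2)) volume 0 r :=
  ContinuousOn.intervalIntegrable <| continuousOn_id.mul <| continuousOn_const.div (by fun_prop)
    fun _ hs => (pow_pos (one_sub_sq_mul_sq_pos_of_mem_uIcc hr har hs) 2).ne'

lemma integral_mul_sq_div_one_sub_sq (hr : 0 ≤ r) (har : a ^ 2 * r ^ 2 < 1) :
    ∫ s in (0 : ℝ)..r, s * (a ^ 2 / (1 - a ^ 2 * s ^ 2) ^ 2)
      = a ^ 2 * r ^ 2 / (2 * (1 - a ^ 2 * r ^ 2)) := by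
  have hr' := one_sub_sq_mul_sq_pos_of_mem_uIcc hr har right_mem_uIcc
  rw [intervalIntegral.integral_eq_sub_of_hasDerivAt (f := fun s => 1 / (2 * (1 - a ^ 2 * s ^ 2)))
    _ (intervalIntegrable_mul_sq_div_one_sub_sq hr har)]
  · field_simp
    ring
  intro s hs
  have hs' := (one_sub_sq_mul_sq_pos_of_mem_uIcc hr har hs).ne'
  have hden := (((hasDerivAt_pow 2 s).const_mul (a ^ 2)).const_sub 1).const_mul 2
  refine ((hasDerivAt_const s 1).fun_div hden (mul_ne_zero two_ne_zero hs')).congr_deriv ?_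
  norm_num
  field_simp

end

theorem stmt_11 (ρ : ℝ) (hρ0 : 0 < ρ) (hρ1 : ρ < 1)
    (G : ℂ → ℂ) (hG : ∀ z : ℂ, G z = (ρ : ℂ) * z / (1 - (ρ : ℂ) * z)) :
    (∀ z ∈ Metric.ball (0 : ℂ) 1, 0 < 1 + 2 * (G z).re) ∧
    ∀ r : ℝ, 0 < r → r < 1 →
      NG G r = r ^ 2 / (1 - r ^ 2) - ρ ^ 2 * r ^ 2 / (1 - ρ ^ 2 * r ^ 2) := by
  obtain rfl : G = fun z => (ρ : ℂ) * z / (1 - (ρ : ℂ) * z) := funext hG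
  have hρ : ‖(ρ : ℂ)‖ = ρ := Complex.norm_of_nonneg hρ0.le
  have hρz {z : ℂ} (hz : ‖z‖ < 1) : ‖(ρ : ℂ) * z‖ < 1 := by
    rw [norm_mul, hρ]
    nlinarith [norm_nonneg z]
  refine ⟨fun z hz => one_add_two_mul_re_div_one_sub_pos (hρz (mem_ball_zero_iff.mp hz)),
    fun r hr0 hr1 => ?_⟩
  have hradial : EqOn
      (fun z : ℂ => 1 / (1 - ‖z‖ ^ 2) ^ 2
        - ‖deriv (fun z => (ρ : ℂ) * z / (1 - (ρ : ℂ) * z)) z‖ ^ 2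
          / (1 + 2 * ((ρ : ℂ) * z / (1 - (ρ : ℂ) * z)).re) ^ 2)
      (fun z => (fun s => 1 / (1 - s ^ 2) ^ 2 - ρ ^ 2 / (1 - ρ ^ 2 * s ^ 2) ^ 2) ‖z‖)
      (ball 0 r) := fun z hz => by
    beta_reduce
    rw [norm_deriv_sq_div_one_add_two_mul_re_sq _ _ (hρz ((mem_ball_zero_iff.mp hz).trans hr1)),
      hρ]
  have hr1' : (1 : ℝ) ^ 2 * r ^ 2 < 1 := by nlinarith
  have hρr : ρ ^ 2 * r ^ 2 < 1 := by nlinarith [mul_pos hρ0 hr0]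
  have h1 := integral_mul_sq_div_one_sub_sq hr0.le hr1'
  have hint := intervalIntegrable_mul_sq_div_one_sub_sq hr0.le hr1'
  simp only [one_pow, one_mul] at h1 hint
  rw [NG, setIntegral_congr_fun measurableSet_ball hradial, Complex.setIntegral_ball_comp_norm
    (fun s => 1 / (1 - s ^ 2) ^ 2 - ρ ^ 2 / (1 - ρ ^ 2 * s ^ 2) ^ 2) hr0.le]
  simp only [smul_eq_mul, mul_sub]
  rw [intervalIntegral.integral_sub hint (intervalIntegrable_mul_sq_div_one_sub_sq hr0.le hρr), h1,
    integral_mul_sq_div_one_sub_sq hr0.le hρr]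
  field_simp
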